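/- Let w_0, w_1, ..., w_{k-1} be reals such that for all x ∈ {-1,1}^k, Σ_{i=0}^{k-1} w_i L_i(x) ≥ 0 iff g_0(x) = 1, where L_0(x) = x_1 + x_k, L_i(x) = x_i - x_{i+1} for 1 ≤ i ≤ k-1, and g_0(x) = -x_1 if all bits of x are equal and x_1 otherwise. Then w_0 < 0, w_j > 0 for 1 ≤ j ≤ k-1, and w_{j-1} > w_j for 2 ≤ j ≤ k-1. -/
import Mathlib


/-- The linear forms `L_0(x) = x_1 + x_k`, `L_i(x) = x_i - x_{i+1}` for `1 ≤ i ≤ k-1`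
(variables 0-indexed). -/
def Lform {k : ℕ} (hk : 2 ≤ k) (x : Fin k → ℤ) (i : Fin k) : ℤ :=
  if (i : ℕ) = 0 then x ⟨0, by omega⟩ + x ⟨k - 1, by omega⟩
  else x ⟨(i : ℕ) - 1, by omega⟩ - x i

/-- The function `g₀ : {-1,1}^k → {-1,1}`: `-x_1` if all bits equal, `x_1` otherwise. -/
def g0fun {k : ℕ} (hk : 2 ≤ k) (x : Fin k → ℤ) : ℤ :=
  if ∀ i j, x i = x j then -x ⟨0, by omega⟩ else x ⟨0, by omega⟩

/-- If `Σ_{i=0}^{k-1} w_i L_i(x)` sign-represents `g₀` on `{-1,1}^k`, then `w_0 < 0`,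
`w_j > 0` for `1 ≤ j ≤ k-1`, and the weights strictly decrease: `w_{j-1} > w_j`
for `2 ≤ j ≤ k-1`. -/

theorem stmt9 (k : ℕ) (hk : 3 ≤ k) (w : Fin k → ℝ)
    (hrep : ∀ x : Fin k → ℤ, (∀ i, x i = 1 ∨ x i = -1) →
      ((0 ≤ ∑ i, w i * ((Lform (by omega) x i : ℤ) : ℝ)) ↔ g0fun (by omega) x = 1)) :
    w ⟨0, by omega⟩ < 0 ∧
      (∀ j : Fin k, 1 ≤ (j : ℕ) → 0 < w j) ∧
      ∀ j : Fin k, 2 ≤ (j : ℕ) → w j < w ⟨(j : ℕ) - 1, by omega⟩ := by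
  have h2 : 2 ≤ k := by omega
  -- Part 1 : w 0 < 0
  have hw0 : w ⟨0, by omega⟩ < 0 := by
    obtain ⟨x, hxdef⟩ : ∃ x : Fin k → ℤ, x = fun _ => 1 := ⟨_, rfl⟩
    have hx := hrep x (fun i => Or.inl (by rw [hxdef]))
    have hg : g0fun (by omega : 2 ≤ k) x = -1 := by simp [g0fun, hxdef]
    have hne : ¬ (0:ℝ) ≤ ∑ i, w i * ((Lform (by omega : 2 ≤ k) x i : ℤ) : ℝ) := by
      intro h; have := hx.mp h; rw [hg] at this; norm_num at this
    have hL : ∀ i : Fin k, ((Lform (by omega : 2 ≤ k) x i : ℤ) : ℝ)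
        = (if i = (⟨0, by omega⟩ : Fin k) then 2 else 0) := by
      intro i
      simp only [Lform, hxdef, Fin.ext_iff]
      split_ifs <;> simp_all
    rw [Finset.sum_congr rfl (fun i _ => by rw [hL i])] at hne
    simp [Finset.sum_ite_eq'] at hne
    linarith
  refine ⟨hw0, fun j hj => ?_, fun j hj => ?_⟩
  -- Part 2 : 0 < w j for j ≥ 1
  · have hjk : (j : ℕ) < k := j.isLt
    obtain ⟨x, hxdef⟩ : ∃ x : Fin k → ℤ,
        x = fun i : Fin k => if (i : ℕ) < (j : ℕ) then -1 else 1 :=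
      ⟨fun i : Fin k => if (i : ℕ) < (j : ℕ) then -1 else 1, rfl⟩
    have hx := hrep x (fun i => by
      rw [hxdef]
      by_cases h : (i:ℕ) < (j:ℕ)
      · exact Or.inr (if_pos h)
      · exact Or.inl (if_neg h))
    have hx0 : x ⟨0, by omega⟩ = -1 := by
      rw [hxdef]; exact if_pos (by simp only [Fin.val_mk]; omega)
    have hxj : x j = 1 := by rw [hxdef]; exact if_neg (lt_irrefl _)
    have hneq : ¬ ∀ a b, x a = x b := fun h =>
      absurd (hx0 ▸ hxj ▸ h ⟨0, by omega⟩ j) (by norm_num)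
    have hg : g0fun (by omega : 2 ≤ k) x = -1 := by
      unfold g0fun; rw [if_neg hneq]; exact hx0
    have hlt : ¬ (0:ℝ) ≤ ∑ i, w i * ((Lform (by omega : 2 ≤ k) x i : ℤ) : ℝ) := by
      intro h; have := hx.mp h; rw [hg] at this; norm_num at this
    have hL : ∀ i : Fin k, (Lform (by omega : 2 ≤ k) x i) = if (i:ℕ) = (j:ℕ) then -2 else 0 := by
      intro i
      unfold Lform
      simp only [hxdef, Fin.val_mk]
      split_ifs <;> omega
    have hLR : ∀ i : Fin k, ((Lform (by omega : 2 ≤ k) x i : ℤ) : ℝ)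
        = if i = j then -2 else 0 := by
      intro i
      simp only [hL i]
      rcases eq_or_ne i j with h | h
      · simp [h]
      · rw [if_neg (fun hc => h (Fin.ext hc)), if_neg h]; simp
    rw [Finset.sum_congr rfl (fun i _ => by rw [hLR i])] at hlt
    simp only [mul_ite, mul_zero, Finset.sum_ite_eq', Finset.mem_univ, if_true] at hlt
    linarith
  -- Part 3 : w j < w (j-1) for j ≥ 2
  · have hjk : (j : ℕ) < k := j.isLt
    obtain ⟨x, hxdef⟩ : ∃ x : Fin k → ℤ,
        x = fun i : Fin k => if (i : ℕ) = (j : ℕ) - 1 then 1 else -1 :=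
      ⟨fun i : Fin k => if (i : ℕ) = (j : ℕ) - 1 then 1 else -1, rfl⟩
    have hx := hrep x (fun i => by
      rw [hxdef]
      by_cases h : (i:ℕ) = (j:ℕ) - 1
      · exact Or.inl (if_pos h)
      · exact Or.inr (if_neg h))
    have hx0 : x ⟨0, by omega⟩ = -1 := by
      rw [hxdef]; exact if_neg (by simp only [Fin.val_mk]; omega)
    have hxj : x ⟨(j:ℕ) - 1, by omega⟩ = 1 := by
      rw [hxdef]; exact if_pos (by simp only [Fin.val_mk])
    have hneq : ¬ ∀ a b, x a = x b := fun h =>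
      absurd (hx0 ▸ hxj ▸ h ⟨0, by omega⟩ ⟨(j:ℕ) - 1, by omega⟩) (by norm_num)
    have hg : g0fun (by omega : 2 ≤ k) x = -1 := by
      unfold g0fun; rw [if_neg hneq]; exact hx0
    have hlt : ¬ (0:ℝ) ≤ ∑ i, w i * ((Lform (by omega : 2 ≤ k) x i : ℤ) : ℝ) := by
      intro h; have := hx.mp h; rw [hg] at this; norm_num at this
    have hL : ∀ i : Fin k, (Lform (by omega : 2 ≤ k) x i)
        = if (i:ℕ) = 0 then -2 else if (i:ℕ) = (j:ℕ) - 1 then -2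
          else if (i:ℕ) = (j:ℕ) then 2 else 0 := by
      intro i
      unfold Lform
      simp only [hxdef, Fin.val_mk]
      split_ifs <;> omega
    have hLR : ∀ i : Fin k, ((Lform (by omega : 2 ≤ k) x i : ℤ) : ℝ)
        = (if i = (⟨0, by omega⟩ : Fin k) then -2 else 0)
          + (if i = (⟨(j:ℕ) - 1, by omega⟩ : Fin k) then -2 else 0)
          + (if i = j then 2 else 0) := by
      intro i
      simp only [hL i]
      simp only [Fin.ext_iff, Fin.val_mk]
      rcases eq_or_ne (i:ℕ) 0 with h0 | h0
      · rw [if_pos h0, if_pos h0, if_neg (by omega), if_neg (by omega)]; norm_num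
      · rcases eq_or_ne (i:ℕ) ((j:ℕ) - 1) with h1 | h1
        · rw [if_neg h0, if_pos h1, if_neg h0, if_pos h1, if_neg (by omega)]; norm_num
        · rcases eq_or_ne (i:ℕ) (j:ℕ) with h2' | h2'
          · rw [if_neg h0, if_neg h1, if_pos h2', if_neg h0, if_neg h1, if_pos h2']; norm_num
          · rw [if_neg h0, if_neg h1, if_neg h2', if_neg h0, if_neg h1, if_neg h2']; norm_num
    rw [Finset.sum_congr rfl (fun i _ => by rw [hLR i])] at hlt
    simp only [mul_add, Finset.sum_add_distrib, mul_ite, mul_zero,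
      Finset.sum_ite_eq', Finset.mem_univ, if_true] at hlt
    have e1 : w (⟨0, by omega⟩ : Fin k) = w ⟨0, by omega⟩ := rfl
    push_neg at hlt
    linarith [hlt]
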